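/- Let A be an algebra with product ▷ satisfying w▷[x,y,z] = [w▷x,y,z]+[x,w▷y,z]+[x,y,w▷z], where [x,y,z] is the triple bracket (skew associator). Then for any x₀,x₁,x₂ ∈ A and r₁,r₂,r₃ ∈ A, the second-order identity holds: (x₀▷(x₁▷[r₁,r₂,r₃])) − ((x₀▷x₁)▷[r₁,r₂,r₃]) equals the sum over all ways of distributing the word x₀x₁ (via the left D-algebra action, i.e., ass(x₀,x₁,·)) among the three slots: [ass(x₀,x₁,r₁),r₂,r₃] + [r₁,ass(x₀,x₁,r₂),r₃] + [r₁,r₂,ass(x₀,x₁,r₃)] + [x₀▷r₁,x₁▷r₂,r₃] + [x₀▷r₁,r₂,x₁▷r₃] + [r₁,x₀▷r₂,x₁▷r₃] + [x₁▷r₁,x₀▷r₂,r₃] + [x₁▷r₁,r₂,x₀▷r₃] + [r₁,x₁▷r₂,x₀▷r₃], where ass(a,b,c) = a▷(b▷c) − (a▷b)▷c. -/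

import Mathlib

/-!
Apply the derivation identity twice to `x₀ ▷ (x₁ ▷ [r₁,r₂,r₃])` and once to
`(x₀ ▷ x₁) ▷ [r₁,r₂,r₃]`. The terms in which `x₀` and `x₁` hit the same slot pair up,
by additivity of the bracket in that slot, into associators `ass(x₀,x₁,rᵢ)`; the six
terms in which they hit different slots remain.
-/

namespace LinearMap

variable {R A : Type*} [CommSemiring R] [AddCommGroup A] [Module R A]

def associator (op : A →ₗ[R] A →ₗ[R] A) (a b c : A) : A :=
  op a (op b c) - op (op a b) c

def skewAssociator (op : A →ₗ[R] A →ₗ[R] A) (x y z : A) : A :=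
  associator op x y z - associator op y x z

variable (op : A →ₗ[R] A →ₗ[R] A)

theorem skewAssociator_sub_left (a b y z : A) :
    skewAssociator op (a - b) y z = skewAssociator op a y z - skewAssociator op b y z := by
  simp only [skewAssociator, associator, map_sub, sub_apply]
  abel

theorem skewAssociator_sub_middle (x a b z : A) :
    skewAssociator op x (a - b) z = skewAssociator op x a z - skewAssociator op x b z := by
  simp only [skewAssociator, associator, map_sub, sub_apply]
  abel

theorem skewAssociator_sub_right (x y a b : A) :
    skewAssociator op x y (a - b) = skewAssociator op x y a - skewAssociator op x y b := by
  simp only [skewAssociator, associator, map_sub]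
  abel

theorem associator_skewAssociator_of_derivation
    (hder : ∀ w x y z : A, op w (skewAssociator op x y z) =
      skewAssociator op (op w x) y z + skewAssociator op x (op w y) z +
        skewAssociator op x y (op w z))
    (x₀ x₁ r₁ r₂ r₃ : A) :
    associator op x₀ x₁ (skewAssociator op r₁ r₂ r₃) =
      skewAssociator op (associator op x₀ x₁ r₁) r₂ r₃
      + skewAssociator op r₁ (associator op x₀ x₁ r₂) r₃
      + skewAssociator op r₁ r₂ (associator op x₀ x₁ r₃)
      + skewAssociator op (op x₀ r₁) (op x₁ r₂) r₃
      + skewAssociator op (op x₀ r₁) r₂ (op x₁ r₃)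
      + skewAssociator op r₁ (op x₀ r₂) (op x₁ r₃)
      + skewAssociator op (op x₁ r₁) (op x₀ r₂) r₃
      + skewAssociator op (op x₁ r₁) r₂ (op x₀ r₃)
      + skewAssociator op r₁ (op x₁ r₂) (op x₀ r₃) := by
  rw [associator, hder x₁, map_add, map_add, hder x₀ (op x₁ r₁), hder x₀ r₁ (op x₁ r₂),
    hder x₀ r₁ r₂ (op x₁ r₃), hder (op x₀ x₁), associator, associator, associator,
    skewAssociator_sub_left, skewAssociator_sub_middle, skewAssociator_sub_right]
  abel

end LinearMap

/-- The `n = 2` case of the D-algebra action of words on triple brackets: if `▷`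
satisfies the LAT derivation identity, then the action of the word `x₀x₁` (i.e. the
associator `ass(x₀,x₁,·)`) on `[r₁,r₂,r₃]` distributes over the three slots. -/
theorem d_algebra_word_action_on_triple_bracket
    {K A : Type*} [Field K] [AddCommGroup A] [Module K A]
    (op : A →ₗ[K] A →ₗ[K] A) (trib : A → A → A → A)
    (htrib : ∀ x y z : A, trib x y z =
      (op x (op y z) - op (op x y) z) - (op y (op x z) - op (op y x) z))
    (hLAT2 : ∀ w x y z : A, op w (trib x y z) =
      trib (op w x) y z + trib x (op w y) z + trib x y (op w z)) :
    ∀ x₀ x₁ r₁ r₂ r₃ : A,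
      op x₀ (op x₁ (trib r₁ r₂ r₃)) - op (op x₀ x₁) (trib r₁ r₂ r₃) =
        trib (op x₀ (op x₁ r₁) - op (op x₀ x₁) r₁) r₂ r₃
        + trib r₁ (op x₀ (op x₁ r₂) - op (op x₀ x₁) r₂) r₃
        + trib r₁ r₂ (op x₀ (op x₁ r₃) - op (op x₀ x₁) r₃)
        + trib (op x₀ r₁) (op x₁ r₂) r₃
        + trib (op x₀ r₁) r₂ (op x₁ r₃)
        + trib r₁ (op x₀ r₂) (op x₁ r₃)
        + trib (op x₁ r₁) (op x₀ r₂) r₃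
        + trib (op x₁ r₁) r₂ (op x₀ r₃)
        + trib r₁ (op x₁ r₂) (op x₀ r₃) := by
  obtain rfl : trib = LinearMap.skewAssociator op := by
    funext x y z
    exact htrib x y z
  exact LinearMap.associator_skewAssociator_of_derivation op hLAT2
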